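/- arXiv:1908.07571 — 5 statements merged into one kernel-verified Lean document; each statement's English description precedes it below -/
import Mathlib

section
/- Let d be an integer and let A be a 2×2 integer matrix with determinant d such that 1 is an eigenvalue of A, i.e. det(A - I) = 0. Then there exist a 2×2 integer matrix U with det U = 1 and an integer c such that U⁻¹ * A * U is the upper triangular matrix with first row (d, c) and second row (0, 1). -/
/-- An integer matrix `!![p,q;r,s]` with zero determinant has a primitive kernel vector. -/
lemma kernel_vec (p q r s : ℤ) (h : p * s = q * r) :
    ∃ x y : ℤ, IsCoprime x y ∧ p * x + q * y = 0 ∧ r * x + s * y = 0 := by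
  by_cases hpq : p = 0 ∧ q = 0
  · by_cases hrs : r = 0 ∧ s = 0
    · exact ⟨1, 0, isCoprime_one_left, by simp [hpq.1, hpq.2], by simp [hrs.1, hrs.2]⟩
    · set g : ℤ := (Int.gcd r s : ℤ) with hg
      have hdr : g ∣ r := Int.gcd_dvd_left r s
      have hds : g ∣ s := Int.gcd_dvd_right r s
      refine ⟨s / g, -(r / g), ?_, by simp [hpq.1, hpq.2], ?_⟩
      · rw [IsCoprime.neg_right_iff, Int.isCoprime_iff_gcd_eq_one]
        have := Int.gcd_div_gcd_div_gcd (i := r) (j := s)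
          (Int.gcd_pos_iff.mpr (by tauto))
        rw [Int.gcd_comm]
        exact_mod_cast this
      · have h1 : r * (s / g) = r * s / g := (Int.mul_ediv_assoc r hds).symm
        have h2 : s * (r / g) = s * r / g := (Int.mul_ediv_assoc s hdr).symm
        have h3 : s * r = r * s := mul_comm s r
        rw [mul_neg, h1, h2, h3]
        ring
  · set g : ℤ := (Int.gcd p q : ℤ) with hg
    have hdp : g ∣ p := Int.gcd_dvd_left p q
    have hdq : g ∣ q := Int.gcd_dvd_right p q
    refine ⟨q / g, -(p / g), ?_, ?_, ?_⟩
    · rw [IsCoprime.neg_right_iff, Int.isCoprime_iff_gcd_eq_one]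
      have := Int.gcd_div_gcd_div_gcd (i := p) (j := q)
        (Int.gcd_pos_iff.mpr (by tauto))
      rw [Int.gcd_comm]
      exact_mod_cast this
    · have h1 : p * (q / g) = p * q / g := (Int.mul_ediv_assoc p hdq).symm
      have h2 : q * (p / g) = q * p / g := (Int.mul_ediv_assoc q hdp).symm
      have h3 : q * p = p * q := mul_comm q p
      rw [mul_neg, h1, h2, h3]
      ring
    · have h1 : r * (q / g) = r * q / g := (Int.mul_ediv_assoc r hdq).symm
      have h2 : s * (p / g) = s * p / g := (Int.mul_ediv_assoc s hdp).symm
      have h3 : s * p = r * q := by rw [mul_comm s p, h, mul_comm q r]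
      rw [mul_neg, h1, h2, h3]
      ring

/-- A 2×2 integer matrix with determinant `d` having `1` as an eigenvalue is conjugate
by a determinant-one integer matrix to the upper triangular matrix `[[d, c], [0, 1]]`. -/
theorem stmt_0 (d : ℤ) (A : Matrix (Fin 2) (Fin 2) ℤ)
    (hdet : A.det = d) (heig : (A - 1).det = 0) :
    ∃ (U : Matrix (Fin 2) (Fin 2) ℤ) (c : ℤ),
      U.det = 1 ∧ U⁻¹ * A * U = !![d, c; 0, 1] := by
  set a := A 0 0 with ha
  set b := A 0 1 with hb
  set c := A 1 0 with hc
  set e := A 1 1 with he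
  have hAeq : A = !![a, b; c, e] := by
    ext i j; fin_cases i <;> fin_cases j <;> rfl
  have hdet' : a * e - b * c = d := by
    rw [← hdet, Matrix.det_fin_two]
  have htr : a + e = d + 1 := by
    have h1 : (A - 1) 0 0 = a - 1 := by simp [ha, Matrix.one_apply]
    have h2 : (A - 1) 0 1 = b := by simp [hb, Matrix.one_apply]
    have h3 : (A - 1) 1 0 = c := by simp [hc, Matrix.one_apply]
    have h4 : (A - 1) 1 1 = e - 1 := by simp [he, Matrix.one_apply]
    rw [Matrix.det_fin_two, h1, h2, h3, h4] at heig
    linear_combination hdet' - heig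
  -- the matrix A - d•1 has determinant 0
  have hker : (a - d) * (e - d) = b * c := by linear_combination hdet' - d * htr
  obtain ⟨x, y, hco, h1, h2⟩ := kernel_vec (a - d) b c (e - d) hker
  -- eigen equations
  have he1 : a * x + b * y = d * x := by linarith [h1]
  have he2 : c * x + e * y = d * y := by linarith [h2]
  obtain ⟨w, u', hwu⟩ := hco
  have hwu' : w * x + u' * y = 1 := hwu
  refine ⟨!![x, -u'; y, w], w * (a * (-u') + b * w) - (-u') * (c * (-u') + e * w), ?_, ?_⟩
  · rw [Matrix.det_fin_two_of]; linear_combination hwu'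
  · have hinv : (!![x, -u'; y, w] : Matrix (Fin 2) (Fin 2) ℤ)⁻¹ = !![w, u'; -y, x] := by
      apply Matrix.inv_eq_right_inv
      ext i j
      fin_cases i <;> fin_cases j <;>
        simp [Matrix.mul_apply, Fin.sum_univ_two, Matrix.one_apply] <;>
        first
          | ring1
          | linear_combination hwu'
    rw [hinv, hAeq]
    ext i j
    fin_cases i <;> fin_cases j <;>
      simp [Matrix.mul_apply, Fin.sum_univ_two]
    all_goals first
      | ring1
      | linear_combination w * he1 + u' * he2 + d * hwu'
      | linear_combination x * he2 - y * he1
      | linear_combination (x * w + y * u') * htr + hwu' - w * he1 - u' * he2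
end

section
/- Let d be an integer with d ≥ 2 and let A be a 2×2 integer matrix with determinant d such that 1 is an eigenvalue of A, i.e. det(A - I) = 0. Then there exist a 2×2 integer matrix U with det U = 1 and an integer c with 0 ≤ c ≤ d - 2 such that U⁻¹ * A * U is the upper triangular matrix with first row (d, c) and second row (0, 1). -/
/-! The characteristic polynomial of `A` is `(X - 1)(X - d)`, so `A - d` is a nonzero singular
integer matrix; a primitive vector in its kernel extends to a basis of `ℤ²` of determinant `1`.
In that basis `A` is upper triangular with diagonal `(d, 1)`, the `1` being forced by
`det A = d`. Conjugating further by `[[1, t], [0, 1]]` shifts the corner entry by `t (d - 1)`,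
which reduces it modulo `d - 1`. -/

lemma Int.exists_smul_isCoprime {v : Fin 2 → ℤ} (hv : v ≠ 0) :
    ∃ g ≠ 0, ∃ w : Fin 2 → ℤ, IsCoprime (w 0) (w 1) ∧ v = g • w := by
  have hpos : 0 < Int.gcd (v 0) (v 1) := by
    refine Int.gcd_pos_iff.mpr (not_and_or.mp fun h => hv ?_)
    ext i; fin_cases i <;> simp [h.1, h.2]
  obtain ⟨x, y, hxy, hx, hy⟩ := Int.exists_gcd_one hpos
  refine ⟨Int.gcd (v 0) (v 1), by exact_mod_cast hpos.ne', ![x, y],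
    Int.isCoprime_iff_gcd_eq_one.mpr hxy, ?_⟩
  ext i
  fin_cases i
  exacts [hx.trans (mul_comm _ _), hy.trans (mul_comm _ _)]

namespace Matrix

variable {R : Type*} [CommRing R]

lemma det_sub_smul_one_fin_two (A : Matrix (Fin 2) (Fin 2) R) (μ : R) :
    (A - μ • 1).det = μ ^ 2 - A.trace * μ + A.det := by
  rw [det_fin_two, det_fin_two A, trace_fin_two]
  simp only [sub_apply, smul_apply, one_apply_eq, one_apply_ne zero_ne_one,
    one_apply_ne one_ne_zero, smul_eq_mul]
  ring

lemma exists_det_eq_one_col_zero_eq {v : Fin 2 → R} (hv : IsCoprime (v 0) (v 1)) :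
    ∃ U : Matrix (Fin 2) (Fin 2) R, U.det = 1 ∧ U.col 0 = v := by
  obtain ⟨a, b, hab⟩ := hv
  refine ⟨!![v 0, -b; v 1, a], by rw [det_fin_two_of]; linear_combination hab, ?_⟩
  ext i
  fin_cases i <;> rfl

lemma inv_mul_mul_upperUnitriangular (d c t : R) :
    !![1, t; 0, 1]⁻¹ * !![d, c; 0, 1] * !![1, t; 0, 1] = !![d, c + t * (d - 1); 0, 1] := by
  rw [inv_eq_left_inv (B := !![1, -t; 0, 1]) (by rw [mul_fin_two, one_fin_two]; simp)]
  rw [mul_fin_two, mul_fin_two]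
  ring_nf

lemma exists_inv_mul_mul_eq_of_mulVec_col_zero [IsDomain R] {A U : Matrix (Fin 2) (Fin 2) R}
    {d : R} (hd : d ≠ 0) (hA : A.det = d) (hU : IsUnit U.det) (hAU : A *ᵥ U.col 0 = d • U.col 0) :
    ∃ c, U⁻¹ * A * U = !![d, c; 0, 1] := by
  set M := U⁻¹ * A * U
  have hcol : M.col 0 = d • Pi.single 0 1 := by
    rw [← mulVec_single_one, ← mulVec_mulVec, mulVec_single_one, ← mulVec_mulVec, hAU,
      mulVec_smul, ← mulVec_single_one, mulVec_mulVec, nonsing_inv_mul U hU, one_mulVec]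
  have h00 : M 0 0 = d := by simpa using congrFun hcol 0
  have h10 : M 1 0 = 0 := by simpa using congrFun hcol 1
  have h11 : M 1 1 = 1 := by
    have hdet : M.det = d := by
      rw [det_conj' ((isUnit_iff_isUnit_det U).mpr hU), hA]
    rw [det_fin_two, h00, h10, mul_zero, sub_zero] at hdet
    exact mul_left_cancel₀ hd (hdet.trans (mul_one d).symm)
  refine ⟨M 0 1, ?_⟩
  ext i j
  fin_cases i <;> fin_cases j <;> simp [h00, h10, h11]

lemma exists_isCoprime_mulVec_eq_zero {B : Matrix (Fin 2) (Fin 2) ℤ} (hB : B.det = 0)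
    (hne : B ≠ 0) : ∃ v : Fin 2 → ℤ, IsCoprime (v 0) (v 1) ∧ B *ᵥ v = 0 := by
  have hadj : B.adjugate ≠ 0 := fun h => hne <| by
    simpa [h] using (adjugate_adjugate B (by simp)).symm
  obtain ⟨j, hj⟩ : ∃ j, B.adjugate.col j ≠ 0 := by
    by_contra! h
    exact hadj (by ext i j; exact congrFun (h j) i)
  obtain ⟨g, hg, w, hw, hcol⟩ := Int.exists_smul_isCoprime hj
  refine ⟨w, hw, (smul_eq_zero.mp ?_).resolve_left hg⟩
  rw [← mulVec_smul, ← hcol, ← mulVec_single_one, mulVec_mulVec, mul_adjugate, hB, zero_smul,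
    zero_mulVec]

end Matrix

open Matrix

/-- A 2×2 integer matrix with determinant `d ≥ 2` having `1` as an eigenvalue is conjugate
by a determinant-one integer matrix to `[[d, c], [0, 1]]` with `0 ≤ c ≤ d - 2`. -/
theorem stmt_1 (d : ℤ) (hd : 2 ≤ d) (A : Matrix (Fin 2) (Fin 2) ℤ)
    (hdet : A.det = d) (heig : (A - 1).det = 0) :
    ∃ (U : Matrix (Fin 2) (Fin 2) ℤ) (c : ℤ),
      U.det = 1 ∧ 0 ≤ c ∧ c ≤ d - 2 ∧ U⁻¹ * A * U = !![d, c; 0, 1] := by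
  have htr : A.trace = d + 1 := by
    have := det_sub_smul_one_fin_two A 1
    rw [one_smul, heig, hdet] at this
    linarith
  have hsing : (A - d • 1).det = 0 := by
    rw [det_sub_smul_one_fin_two, htr, hdet]
    ring
  have hne : A - d • 1 ≠ 0 := by
    intro h
    rw [sub_eq_zero.mp h, det_smul, det_one] at hdet
    have : d ^ 2 = d := by simpa using hdet
    nlinarith
  obtain ⟨v, hv, hker⟩ := exists_isCoprime_mulVec_eq_zero hsing hne
  obtain ⟨U, hU, rfl⟩ := exists_det_eq_one_col_zero_eq hv
  have hAU : A *ᵥ U.col 0 = d • U.col 0 := by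
    rwa [sub_mulVec, smul_mulVec, one_mulVec, sub_eq_zero] at hker
  obtain ⟨c, hc⟩ := exists_inv_mul_mul_eq_of_mulVec_col_zero (by omega) hdet
    (by rw [hU]; exact isUnit_one) hAU
  have hmod : c + -(c / (d - 1)) * (d - 1) = c % (d - 1) := by
    rw [Int.emod_def]
    ring
  refine ⟨U * !![1, -(c / (d - 1)); 0, 1], c % (d - 1), by simp [hU], Int.emod_nonneg _ (by omega),
    by linarith [Int.emod_lt_of_pos c (show 0 < d - 1 by omega)], ?_⟩
  rw [Matrix.mul_inv_rev, ← hmod, ← inv_mul_mul_upperUnitriangular, ← hc]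
  simp only [Matrix.mul_assoc]
end

section
/- Let ‖·‖ be the Euclidean norm on ℝ² = EuclideanSpace ℝ (Fin 2). Let λ ∈ (0,1) and J, K > 0 be real numbers. Let B : ℝ² → ℝ² be a linear map such that ‖Bⁿ w‖ ≤ K · λ⁻ⁿ · ‖w‖ for every natural number n and every w ∈ ℝ². Let G : ℝ² → ℝ² be any function such that ‖G(y) - B(y)‖ ≤ J for every y ∈ ℝ². If x ∈ ℝ² satisfies B(x) = λ⁻¹ • x, then for every natural number n, ‖Gⁿ(x) - λ⁻ⁿ • x‖ ≤ J · K · (λ⁻ⁿ - 1) · (λ⁻¹ - 1)⁻¹, where Gⁿ denotes the n-fold iterate G^[n] of G. -/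
/-- The key iteration estimate: if `B` is linear with `‖Bⁿ w‖ ≤ K λ⁻ⁿ ‖w‖`, `G` stays within
distance `J` of `B`, and `B x = λ⁻¹ x`, then
`‖Gⁿ(x) - λ⁻ⁿ x‖ ≤ J K (λ⁻ⁿ - 1)(λ⁻¹ - 1)⁻¹` for all `n`. -/
theorem stmt_5 (lam J K : ℝ) (hlam0 : 0 < lam) (hlam1 : lam < 1) (hJ : 0 < J) (hK : 0 < K)
    (B : EuclideanSpace ℝ (Fin 2) →ₗ[ℝ] EuclideanSpace ℝ (Fin 2))
    (hB : ∀ (n : ℕ) (w : EuclideanSpace ℝ (Fin 2)), ‖(B ^ n) w‖ ≤ K * lam⁻¹ ^ n * ‖w‖)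
    (G : EuclideanSpace ℝ (Fin 2) → EuclideanSpace ℝ (Fin 2))
    (hG : ∀ y, ‖G y - B y‖ ≤ J)
    (x : EuclideanSpace ℝ (Fin 2)) (hx : B x = lam⁻¹ • x) :
    ∀ n : ℕ, ‖G^[n] x - lam⁻¹ ^ n • x‖ ≤ J * K * (lam⁻¹ ^ n - 1) * (lam⁻¹ - 1)⁻¹ := by
  have hr : (1:ℝ) < lam⁻¹ := (one_lt_inv₀ hlam0).mpr hlam1
  set d : ℕ → EuclideanSpace ℝ (Fin 2) := fun i => G (G^[i] x) - B (G^[i] x) with hd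
  have key : ∀ n, G^[n] x - lam⁻¹ ^ n • x =
      ∑ i ∈ Finset.range n, (B ^ (n - 1 - i)) (d i) := by
    intro n
    induction n with
    | zero => simp
    | succ n ih =>
      have h1 : G^[n+1] x - lam⁻¹ ^ (n+1) • x
          = d n + B (G^[n] x - lam⁻¹ ^ n • x) := by
        rw [Function.iterate_succ_apply', map_sub, map_smul, hx, hd]
        rw [pow_succ, smul_smul]
        beta_reduce
        abel
      rw [h1, ih, map_sum, Finset.sum_range_succ]
      have h2 : ∀ i ∈ Finset.range n,
          B ((B ^ (n - 1 - i)) (d i)) = (B ^ (n + 1 - 1 - i)) (d i) := by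
        intro i hi
        have hi' : i < n := Finset.mem_range.mp hi
        have : n + 1 - 1 - i = (n - 1 - i) + 1 := by omega
        rw [this, pow_succ', Module.End.mul_apply]
      rw [Finset.sum_congr rfl h2]
      have : n + 1 - 1 - n = 0 := by omega
      rw [this, pow_zero, Module.End.one_apply]
      abel
  intro n
  rw [key n]
  calc ‖∑ i ∈ Finset.range n, (B ^ (n - 1 - i)) (d i)‖
      ≤ ∑ i ∈ Finset.range n, ‖(B ^ (n - 1 - i)) (d i)‖ := norm_sum_le _ _
    _ ≤ ∑ i ∈ Finset.range n, K * lam⁻¹ ^ (n - 1 - i) * J := by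
        apply Finset.sum_le_sum
        intro i _
        calc ‖(B ^ (n - 1 - i)) (d i)‖ ≤ K * lam⁻¹ ^ (n - 1 - i) * ‖d i‖ := hB _ _
          _ ≤ K * lam⁻¹ ^ (n - 1 - i) * J := by
              have : ‖d i‖ ≤ J := hG _
              have hpos : 0 ≤ K * lam⁻¹ ^ (n - 1 - i) :=
                mul_nonneg hK.le (pow_nonneg (by positivity) _)
              exact mul_le_mul_of_nonneg_left this hpos
    _ = J * K * ∑ i ∈ Finset.range n, lam⁻¹ ^ (n - 1 - i) := by
        rw [Finset.mul_sum]
        exact Finset.sum_congr rfl fun i _ => by ring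
    _ = J * K * ∑ i ∈ Finset.range n, lam⁻¹ ^ i := by
        rw [Finset.sum_range_reflect (fun i => lam⁻¹ ^ i)]
    _ = J * K * (lam⁻¹ ^ n - 1) * (lam⁻¹ - 1)⁻¹ := by
        rw [geom_sum_eq hr.ne']
        ring
end

section
/- Let ‖·‖ be the Euclidean norm on ℝ² = EuclideanSpace ℝ (Fin 2). Let λ ∈ (0,1) and J, K > 0 be real numbers. Let B : ℝ² → ℝ² be a linear map such that ‖Bⁿ w‖ ≤ K · λ⁻ⁿ · ‖w‖ for every natural number n and every w ∈ ℝ². Let G : ℝ² → ℝ² be any function such that ‖G(y) - B(y)‖ ≤ J for every y ∈ ℝ². Suppose x ∈ ℝ² satisfies B(x) = λ⁻¹ • x. Then for every natural number n, ‖Gⁿ(x) - Gⁿ(0)‖ ≥ (‖x‖ - 2·J·K·(λ⁻¹ - 1)⁻¹) · λ⁻ⁿ, where Gⁿ denotes the n-fold iterate G^[n] of G. Consequently, if ‖x‖ > 2·J·K·(λ⁻¹ - 1)⁻¹, then ‖Gⁿ(x) - Gⁿ(0)‖ tends to infinity as n tends to infinity. -/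
/-!
Write `μ = λ⁻¹ > 1`. Since `Gⁿ⁺¹ y - Bⁿ⁺¹ y = (Gⁿ (G y) - Bⁿ (G y)) + Bⁿ (G y - B y)`, the defect
`‖Gⁿ y - Bⁿ y‖` grows by at most `J K μⁿ` per step, so it is bounded by
`J K (μⁿ - 1)/(μ - 1) ≤ J K μⁿ/(μ - 1)` for every `y`. Applying this to `x` and to `0`, and using
`Bⁿ x = μⁿ x` and `Bⁿ 0 = 0`, the triangle inequality gives
`μⁿ ‖x‖ ≤ ‖Gⁿ x - Gⁿ 0‖ + 2 J K μⁿ/(μ - 1)`.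
-/

open Finset Filter

namespace Module.End

variable {R M : Type*} [CommSemiring R] [AddCommMonoid M] [Module R M]

theorem pow_apply_of_apply_eq_smul {f : End R M} {μ : R} {v : M} (hv : f v = μ • v) (n : ℕ) :
    (f ^ n) v = μ ^ n • v := by
  induction n with
  | zero => simp
  | succ n ih => rw [pow_succ', mul_apply, ih, map_smul, hv, smul_smul, pow_succ]

end Module.End

section Perturbation

variable {R E : Type*} [Semiring R] [SeminormedAddCommGroup E] [Module R E]
  {B : Module.End R E} {G : E → E} {J K μ : ℝ}

theorem norm_iterate_sub_pow_apply_le_geom_sum (hK : 0 ≤ K) (hμ : 0 ≤ μ)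
    (hB : ∀ (n : ℕ) (w : E), ‖(B ^ n) w‖ ≤ K * μ ^ n * ‖w‖) (hG : ∀ y, ‖G y - B y‖ ≤ J)
    (n : ℕ) (y : E) : ‖G^[n] y - (B ^ n) y‖ ≤ J * K * ∑ i ∈ range n, μ ^ i := by
  induction n generalizing y with
  | zero => simp
  | succ n ih =>
    have hsplit : G^[n + 1] y - (B ^ (n + 1)) y
        = (G^[n] (G y) - (B ^ n) (G y)) + (B ^ n) (G y - B y) := by
      rw [Function.iterate_succ_apply, pow_succ, Module.End.mul_apply, map_sub]
      abel
    have hstep : ‖(B ^ n) (G y - B y)‖ ≤ K * μ ^ n * J :=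
      (hB n _).trans (mul_le_mul_of_nonneg_left (hG y) (by positivity))
    calc ‖G^[n + 1] y - (B ^ (n + 1)) y‖
        ≤ ‖G^[n] (G y) - (B ^ n) (G y)‖ + ‖(B ^ n) (G y - B y)‖ := hsplit ▸ norm_add_le _ _
      _ ≤ J * K * ∑ i ∈ range n, μ ^ i + K * μ ^ n * J := add_le_add (ih (G y)) hstep
      _ = J * K * ∑ i ∈ range (n + 1), μ ^ i := by rw [sum_range_succ]; ring

theorem norm_iterate_sub_pow_apply_le (hK : 0 ≤ K) (hJ : 0 ≤ J) (hμ : 1 < μ)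
    (hB : ∀ (n : ℕ) (w : E), ‖(B ^ n) w‖ ≤ K * μ ^ n * ‖w‖) (hG : ∀ y, ‖G y - B y‖ ≤ J)
    (n : ℕ) (y : E) : ‖G^[n] y - (B ^ n) y‖ ≤ J * K * (μ - 1)⁻¹ * μ ^ n := by
  have hgeom : ∑ i ∈ range n, μ ^ i ≤ (μ - 1)⁻¹ * μ ^ n := by
    rw [geom_sum_eq hμ.ne', div_eq_inv_mul]
    have : 0 ≤ (μ - 1)⁻¹ := inv_nonneg.mpr (sub_nonneg.mpr hμ.le)
    nlinarith
  calc ‖G^[n] y - (B ^ n) y‖ ≤ J * K * ∑ i ∈ range n, μ ^ i :=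
        norm_iterate_sub_pow_apply_le_geom_sum hK (by linarith) hB hG n y
    _ ≤ J * K * ((μ - 1)⁻¹ * μ ^ n) := by gcongr
    _ = J * K * (μ - 1)⁻¹ * μ ^ n := by ring

end Perturbation

theorem le_norm_iterate_sub_iterate_zero {E : Type*} [SeminormedAddCommGroup E] [NormedSpace ℝ E]
    {B : Module.End ℝ E} {G : E → E} {J K μ : ℝ} (hK : 0 ≤ K) (hJ : 0 ≤ J) (hμ : 1 < μ)
    (hB : ∀ (n : ℕ) (w : E), ‖(B ^ n) w‖ ≤ K * μ ^ n * ‖w‖) (hG : ∀ y, ‖G y - B y‖ ≤ J)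
    {x : E} (hx : B x = μ • x) (n : ℕ) :
    (‖x‖ - 2 * J * K * (μ - 1)⁻¹) * μ ^ n ≤ ‖G^[n] x - G^[n] 0‖ := by
  have hdefect := norm_iterate_sub_pow_apply_le hK hJ hμ hB hG n
  have hx0 := hdefect 0
  rw [map_zero, sub_zero] at hx0
  have hBx : ‖(B ^ n) x‖ = μ ^ n * ‖x‖ := by
    rw [Module.End.pow_apply_of_apply_eq_smul hx, norm_smul, Real.norm_of_nonneg (by positivity)]
  have htriangle : ‖(B ^ n) x‖ ≤ ‖G^[n] x - G^[n] 0‖ + ‖G^[n] x - (B ^ n) x‖ + ‖G^[n] 0‖ := by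
    calc ‖(B ^ n) x‖ = ‖(G^[n] x - G^[n] 0) - (G^[n] x - (B ^ n) x) + G^[n] 0‖ := by
          congr 1; abel
      _ ≤ _ := (norm_add_le _ _).trans (add_le_add_left (norm_sub_le _ _) _)
  linarith [hdefect x]

/-- The divergence estimate: under the same hypotheses as the iteration estimate,
`‖Gⁿ(x) - Gⁿ(0)‖ ≥ (‖x‖ - 2JK(λ⁻¹-1)⁻¹) λ⁻ⁿ`; consequently if
`‖x‖ > 2JK(λ⁻¹-1)⁻¹` then `‖Gⁿ(x) - Gⁿ(0)‖ → ∞`. -/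
theorem stmt_6 (lam J K : ℝ) (hlam0 : 0 < lam) (hlam1 : lam < 1) (hJ : 0 < J) (hK : 0 < K)
    (B : EuclideanSpace ℝ (Fin 2) →ₗ[ℝ] EuclideanSpace ℝ (Fin 2))
    (hB : ∀ (n : ℕ) (w : EuclideanSpace ℝ (Fin 2)), ‖(B ^ n) w‖ ≤ K * lam⁻¹ ^ n * ‖w‖)
    (G : EuclideanSpace ℝ (Fin 2) → EuclideanSpace ℝ (Fin 2))
    (hG : ∀ y, ‖G y - B y‖ ≤ J)
    (x : EuclideanSpace ℝ (Fin 2)) (hx : B x = lam⁻¹ • x) :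
    (∀ n : ℕ, (‖x‖ - 2 * J * K * (lam⁻¹ - 1)⁻¹) * lam⁻¹ ^ n ≤ ‖G^[n] x - G^[n] 0‖) ∧
    (2 * J * K * (lam⁻¹ - 1)⁻¹ < ‖x‖ →
      Filter.Tendsto (fun n : ℕ => ‖G^[n] x - G^[n] 0‖) Filter.atTop Filter.atTop) := by
  have hμ : 1 < lam⁻¹ := (one_lt_inv₀ hlam0).mpr hlam1
  have hlower := le_norm_iterate_sub_iterate_zero hK.le hJ.le hμ hB hG hx
  refine ⟨hlower, fun hlt => tendsto_atTop_mono hlower ?_⟩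
  exact (tendsto_pow_atTop_atTop_of_one_lt hμ).const_mul_atTop (sub_pos.mpr hlt)
end

section
/- Let λ and μ be real numbers with 0 < λ < 1 < |μ|, and let A be a 2×2 real matrix such that A = P * D * P⁻¹ for some invertible 2×2 real matrix P, where D is the diagonal matrix with diagonal entries λ and μ. Let J > 0 and let G : ℝ² → ℝ² be any function such that ‖G(y) - A⁻¹ y‖ ≤ J for every y ∈ ℝ². Then there exists x ∈ ℝ² such that ‖Gⁿ(x) - Gⁿ(0)‖ tends to infinity as n tends to infinity, where Gⁿ denotes the n-fold iterate G^[n] of G and ‖·‖ denotes the Euclidean norm on ℝ² = EuclideanSpace ℝ (Fin 2). -/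
/-!
The coordinate `f` along the `λ`-eigenvector of `A` (the first coordinate in the basis given by
the columns of `P`) is multiplied by `λ⁻¹ > 1` under `A⁻¹`. Since `G` moves each point at most `J`
away from `A⁻¹`, the difference `d n = f (Gⁿ x - Gⁿ 0)` obeys
`|d (n+1)| ≥ λ⁻¹ |d n| - 2 ‖f‖ J`. Once `|d 0|` exceeds the repelling fixed point
`2 ‖f‖ J / (λ⁻¹ - 1)` of this recursion, `|d n|` grows geometrically, and so does
`‖Gⁿ x - Gⁿ 0‖ ≥ |d n| / ‖f‖`.
-/

open Filter

theorem tendsto_atTop_of_mul_sub_le {u : ℕ → ℝ} {b C : ℝ} (hb : 1 < b)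
    (hu : ∀ n, b * u n - C ≤ u (n + 1)) (h0 : C / (b - 1) < u 0) :
    Tendsto u atTop atTop := by
  set c := C / (b - 1) with hc
  have hC : C = (b - 1) * c := by rw [hc, mul_div_cancel₀ _ (sub_ne_zero.mpr hb.ne')]
  -- `c` is the fixed point of `w ↦ b * w - C`, so `u n - c` grows at least geometrically.
  have hgeom : ∀ n, b ^ n * (u 0 - c) ≤ u n - c := by
    intro n
    induction n with
    | zero => simp
    | succ n ih =>
      calc b ^ (n + 1) * (u 0 - c) = b * (b ^ n * (u 0 - c)) := by ring
        _ ≤ b * (u n - c) := by gcongr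
        _ ≤ u (n + 1) - c := by linarith [hu n]
  have hlim : Tendsto (fun n => b ^ n * (u 0 - c) + c) atTop atTop :=
    tendsto_atTop_add_const_right _ c
      ((tendsto_pow_atTop_atTop_of_one_lt hb).atTop_mul_const (sub_pos.mpr h0))
  exact tendsto_atTop_mono (fun n => by linarith [hgeom n]) hlim

section BoundedPerturbation

variable {E : Type*} [NormedAddCommGroup E] [NormedSpace ℝ E]
  {f : E →L[ℝ] ℝ} {L G : E → E} {a J : ℝ}

theorem abs_apply_sub_le_of_dist_le (hfL : ∀ y, f (L y) = a * f y)
    (hG : ∀ y, ‖G y - L y‖ ≤ J) (y z : E) :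
    |a| * |f (y - z)| - 2 * (‖f‖ * J) ≤ |f (G y - G z)| := by
  have hdrift : ∀ w, |f (G w - L w)| ≤ ‖f‖ * J := fun w =>
    (f.le_opNorm _).trans (mul_le_mul_of_nonneg_left (hG w) (norm_nonneg f))
  have hsplit : a * f (y - z) = f (G y - G z) - (f (G y - L y) - f (G z - L z)) := by
    simp only [map_sub, hfL]; ring
  calc |a| * |f (y - z)| - 2 * (‖f‖ * J)
      = |f (G y - G z) - (f (G y - L y) - f (G z - L z))| - 2 * (‖f‖ * J) := by
        rw [← hsplit, abs_mul]
    _ ≤ |f (G y - G z)| := by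
        linarith [abs_sub (f (G y - G z)) (f (G y - L y) - f (G z - L z)),
          abs_sub (f (G y - L y)) (f (G z - L z)), hdrift y, hdrift z]

theorem tendsto_abs_apply_iterate_sub (hfL : ∀ y, f (L y) = a * f y)
    (hG : ∀ y, ‖G y - L y‖ ≤ J) (ha : 1 < |a|) {x z : E}
    (hxz : 2 * (‖f‖ * J) / (|a| - 1) < |f (x - z)|) :
    Tendsto (fun n => |f (G^[n] x - G^[n] z)|) atTop atTop :=
  tendsto_atTop_of_mul_sub_le ha (fun n => by
    simpa only [Function.iterate_succ_apply'] using
      abs_apply_sub_le_of_dist_le hfL hG (G^[n] x) (G^[n] z)) hxz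

theorem exists_tendsto_norm_iterate_sub (hf : f ≠ 0) (hfL : ∀ y, f (L y) = a * f y)
    (hG : ∀ y, ‖G y - L y‖ ≤ J) (ha : 1 < |a|) (z : E) :
    ∃ x, Tendsto (fun n => ‖G^[n] x - G^[n] z‖) atTop atTop := by
  obtain ⟨v, hv⟩ : ∃ v, f v ≠ 0 := by
    by_contra! h
    exact hf (ContinuousLinearMap.ext h)
  set B := 2 * (‖f‖ * J) / (|a| - 1)
  refine ⟨z + ((B + 1) / f v) • v, ?_⟩
  have hxz : B < |f (z + ((B + 1) / f v) • v - z)| := by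
    rw [add_sub_cancel_left, map_smul, smul_eq_mul, div_mul_cancel₀ _ hv]
    exact (lt_add_one B).trans_le (le_abs_self _)
  refine tendsto_atTop_mono (fun n => ?_)
    ((tendsto_abs_apply_iterate_sub hfL hG ha hxz).atTop_div_const (norm_pos_iff.mpr hf))
  exact div_le_of_le_mul₀ (norm_nonneg _) (norm_nonneg _)
    ((f.le_opNorm _).trans_eq (mul_comm _ _))

end BoundedPerturbation

section EigenCoordinate

open Matrix WithLp

variable {𝕜 n : Type*} [RCLike 𝕜] [Fintype n] [DecidableEq n]

noncomputable def Matrix.eigenCoord (P : Matrix n n 𝕜) (i : n) : EuclideanSpace 𝕜 n →L[𝕜] 𝕜 :=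
  (EuclideanSpace.proj i).comp (toEuclideanCLM (n := n) (𝕜 := 𝕜) P⁻¹)

theorem Matrix.eigenCoord_apply (P : Matrix n n 𝕜) (i : n) (y : EuclideanSpace 𝕜 n) :
    P.eigenCoord i y = (P⁻¹ *ᵥ ofLp y) i := rfl

theorem Matrix.eigenCoord_toEuclideanLin_inv {A P : Matrix n n 𝕜} {d : n → 𝕜}
    (hP : IsUnit P.det) (hd : ∀ i, d i ≠ 0) (hA : A = P * diagonal d * P⁻¹) (i : n)
    (y : EuclideanSpace 𝕜 n) :
    P.eigenCoord i (toEuclideanLin A⁻¹ y) = (d i)⁻¹ * P.eigenCoord i y := by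
  have hdiag : (diagonal d)⁻¹ = diagonal d⁻¹ := inv_eq_left_inv <| by
    rw [diagonal_mul_diagonal, ← diagonal_one]
    exact congrArg diagonal (funext fun i => inv_mul_cancel₀ (hd i))
  have hconj : P⁻¹ * A⁻¹ = diagonal d⁻¹ * P⁻¹ := by
    rw [hA, mul_inv_rev, mul_inv_rev, nonsing_inv_nonsing_inv P hP, hdiag, ← mul_assoc,
      ← mul_assoc, nonsing_inv_mul P hP, one_mul]
  rw [eigenCoord_apply, eigenCoord_apply, toLpLin_apply, mulVec_mulVec, hconj, ← mulVec_mulVec]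
  simp [mulVec_diagonal]

theorem Matrix.eigenCoord_ne_zero {P : Matrix n n 𝕜} (hP : IsUnit P.det) (i : n) :
    P.eigenCoord i ≠ 0 := by
  intro h
  have h1 := congrArg (fun g => g (toLp 2 (P *ᵥ Pi.single i 1))) h
  simp only [eigenCoord_apply, mulVec_mulVec, nonsing_inv_mul P hP, one_mulVec] at h1
  simp at h1

end EigenCoordinate

theorem stmt_10_general (lam mu : ℝ) (hlam0 : 0 < lam) (hlam1 : lam < 1) (hmu : 1 < |mu|)
    (A P : Matrix (Fin 2) (Fin 2) ℝ) (hP : IsUnit P.det)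
    (hA : A = P * Matrix.diagonal ![lam, mu] * P⁻¹)
    (J : ℝ)
    (G : EuclideanSpace ℝ (Fin 2) → EuclideanSpace ℝ (Fin 2))
    (hG : ∀ y : EuclideanSpace ℝ (Fin 2), ‖G y - Matrix.toEuclideanLin A⁻¹ y‖ ≤ J) :
    ∃ x : EuclideanSpace ℝ (Fin 2),
      Filter.Tendsto (fun n : ℕ => ‖G^[n] x - G^[n] 0‖) Filter.atTop Filter.atTop := by
  have hd : ∀ i, ![lam, mu] i ≠ 0 := by
    have : mu ≠ 0 := by rintro rfl; norm_num at hmu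
    exact Fin.forall_fin_two.mpr ⟨hlam0.ne', this⟩
  have hlam : 1 < |lam⁻¹| := by
    rw [abs_of_pos (inv_pos.mpr hlam0)]; exact one_lt_inv₀ hlam0 |>.mpr hlam1
  have hfL := Matrix.eigenCoord_toEuclideanLin_inv hP hd hA 0
  exact exists_tendsto_norm_iterate_sub (P.eigenCoord_ne_zero hP 0) hfL hG hlam 0

/-- If `A = P diag(λ, μ) P⁻¹` with `0 < λ < 1 < |μ|` and `G : ℝ² → ℝ²` stays within distance
`J` of the linear map `A⁻¹`, then some orbit pair `Gⁿ(x), Gⁿ(0)` separates to infinity. -/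
theorem stmt_10 (lam mu : ℝ) (hlam0 : 0 < lam) (hlam1 : lam < 1) (hmu : 1 < |mu|)
    (A P : Matrix (Fin 2) (Fin 2) ℝ) (hP : IsUnit P.det)
    (hA : A = P * Matrix.diagonal ![lam, mu] * P⁻¹)
    (J : ℝ) (hJ : 0 < J)
    (G : EuclideanSpace ℝ (Fin 2) → EuclideanSpace ℝ (Fin 2))
    (hG : ∀ y : EuclideanSpace ℝ (Fin 2), ‖G y - Matrix.toEuclideanLin A⁻¹ y‖ ≤ J) :
    ∃ x : EuclideanSpace ℝ (Fin 2),
      Filter.Tendsto (fun n : ℕ => ‖G^[n] x - G^[n] 0‖) Filter.atTop Filter.atTop :=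
  stmt_10_general lam mu hlam0 hlam1 hmu A P hP hA J G hG
end
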